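/- For the rotational surface of hyperbolic type X with unit normal N(t,θ) := ((yz' − zy')cosh θ, (yz' − zy')sinh θ, xz' − x'z, x'y − xy'), for all (t,θ): ∂N/∂t = ((x₁ − x₁'')/√(−1 + x₁² − (x₁')²))·∂X/∂t and ∂N/∂θ = (√(−1 + x₁² − (x₁')²)/x₁)·∂X/∂θ. (Thus the principal curvatures of X in H³ with respect to N are −λ₁ = −(x₁ − x₁'')/√(−1 + x₁² − (x₁')²) and −λ₂ = −√(−1 + x₁² − (x₁')²)/x₁.) -/

import Mathlib

/-! Write `r = √(x₁² − 1)` and `q = √(−1 + x₁² − x₁'²)`, so that `(y, z) = r (cos φ, sin φ)` with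
`φ' = q / r²`. Then `(y', z')` is the rotation by `φ` of `(x₁x₁'/r, q/r)`, the first two components
of `N` are `q cosh θ` and `q sinh θ`, and `(−N₄, N₃)` is the rotation by `φ` of `(x₁'/r, x₁q/r)`.
Differentiating the rotation of `(u, v)` by `φ` gives the rotation of `(u' − vφ', v' + uφ')`; by
`r² = x₁² − 1` and `q² = r² − x₁'²` these are `−λ₁q/r` and `λ₁x₁x₁'/r` for `(u, v) = (x₁'/r, x₁q/r)`,
and `q' = λ₁x₁'`, which gives `∂N/∂t = λ₁ ∂X/∂t`. The `θ`-derivative is immediate. -/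

open Set

/-- `φ(t) = ∫₀ᵗ √(−1 + x₁² − x₁'²)/(x₁² − 1) dσ` for the hyperbolic-type rotational surface. -/
noncomputable def hypPhi (x₁ : ℝ → ℝ) (t : ℝ) : ℝ :=
  ∫ σ in (0:ℝ)..t, Real.sqrt (-1 + x₁ σ ^ 2 - deriv x₁ σ ^ 2) / (x₁ σ ^ 2 - 1)

/-- `x(t) = x₁(t)`. -/
noncomputable def hypx (x₁ : ℝ → ℝ) (t : ℝ) : ℝ := x₁ t

/-- `y(t) = √(x₁² − 1)·cos φ`. -/
noncomputable def hypy (x₁ : ℝ → ℝ) (t : ℝ) : ℝ :=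
  Real.sqrt (x₁ t ^ 2 - 1) * Real.cos (hypPhi x₁ t)

/-- `z(t) = √(x₁² − 1)·sin φ`. -/
noncomputable def hypz (x₁ : ℝ → ℝ) (t : ℝ) : ℝ :=
  Real.sqrt (x₁ t ^ 2 - 1) * Real.sin (hypPhi x₁ t)

/-- The rotational surface of hyperbolic type `X(t,θ) = (x cosh θ, x sinh θ, y, z)`. -/
noncomputable def hypX (x₁ : ℝ → ℝ) (t θ : ℝ) : ℝ × ℝ × ℝ × ℝ :=
  (hypx x₁ t * Real.cosh θ, hypx x₁ t * Real.sinh θ, hypy x₁ t, hypz x₁ t)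

/-- The unit normal
`N(t,θ) = ((yz' − zy')cosh θ, (yz' − zy')sinh θ, xz' − x'z, x'y − xy')`. -/
noncomputable def hypN (x₁ : ℝ → ℝ) (t θ : ℝ) : ℝ × ℝ × ℝ × ℝ :=
  ((hypy x₁ t * deriv (hypz x₁) t - hypz x₁ t * deriv (hypy x₁) t) * Real.cosh θ,
   (hypy x₁ t * deriv (hypz x₁) t - hypz x₁ t * deriv (hypy x₁) t) * Real.sinh θ,
   hypx x₁ t * deriv (hypz x₁) t - deriv (hypx x₁) t * hypz x₁ t,
   deriv (hypx x₁) t * hypy x₁ t - hypx x₁ t * deriv (hypy x₁) t)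

open Real Filter

theorem hasDerivAt_intervalIntegral_of_continuousOn {E : Type*} [NormedAddCommGroup E]
    [NormedSpace ℝ E] [CompleteSpace E] {f : ℝ → E} {U : Set ℝ} {a t : ℝ} (hU : IsOpen U)
    (hUc : U.OrdConnected) (hf : ContinuousOn f U) (ha : a ∈ U) (ht : t ∈ U) :
    HasDerivAt (fun u => ∫ σ in a..u, f σ) (f t) t :=
  intervalIntegral.integral_hasDerivAt_right
    ((hf.mono (hUc.uIcc_subset ha ht)).intervalIntegrable)
    (hf.stronglyMeasurableAtFilter hU t ht) (hf.continuousAt (hU.mem_nhds ht))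

theorem HasDerivAt.mul_cos_sub_mul_sin {u v φ : ℝ → ℝ} {u' v' φ' t : ℝ}
    (hu : HasDerivAt u u' t) (hv : HasDerivAt v v' t) (hφ : HasDerivAt φ φ' t) :
    HasDerivAt (fun s => u s * Real.cos (φ s) - v s * Real.sin (φ s))
      ((u' - v t * φ') * Real.cos (φ t) - (v' + u t * φ') * Real.sin (φ t)) t :=
  ((hu.mul hφ.cos).sub (hv.mul hφ.sin)).congr_deriv (by ring)

theorem HasDerivAt.mul_sin_add_mul_cos {u v φ : ℝ → ℝ} {u' v' φ' t : ℝ}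
    (hu : HasDerivAt u u' t) (hv : HasDerivAt v v' t) (hφ : HasDerivAt φ φ' t) :
    HasDerivAt (fun s => u s * Real.sin (φ s) + v s * Real.cos (φ s))
      ((u' - v t * φ') * Real.sin (φ t) + (v' + u t * φ') * Real.cos (φ t)) t :=
  ((hu.mul hφ.sin).add (hv.mul hφ.cos)).congr_deriv (by ring)

noncomputable def hypR (x₁ : ℝ → ℝ) (t : ℝ) : ℝ := √(x₁ t ^ 2 - 1)

noncomputable def hypQ (x₁ : ℝ → ℝ) (t : ℝ) : ℝ := √(-1 + x₁ t ^ 2 - deriv x₁ t ^ 2)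

theorem hypx_eq (x₁ : ℝ → ℝ) : hypx x₁ = x₁ := rfl

theorem hypy_eq (x₁ : ℝ → ℝ) : hypy x₁ = fun t => hypR x₁ t * cos (hypPhi x₁ t) := rfl

theorem hypz_eq (x₁ : ℝ → ℝ) : hypz x₁ = fun t => hypR x₁ t * sin (hypPhi x₁ t) := rfl

structure HypProfile (a b : ℝ) (x₁ : ℝ → ℝ) : Prop where
  zero_mem : (0 : ℝ) ∈ Ioo a b
  contDiffOn : ContDiffOn ℝ 2 x₁ (Ioo a b)
  one_lt : ∀ t ∈ Ioo a b, 1 < x₁ t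
  radicand_pos : ∀ t ∈ Ioo a b, 0 < -1 + x₁ t ^ 2 - deriv x₁ t ^ 2

namespace HypProfile

variable {a b t : ℝ} {x₁ : ℝ → ℝ}

theorem hasDerivAt (h : HypProfile a b x₁) (ht : t ∈ Ioo a b) :
    HasDerivAt x₁ (deriv x₁ t) t :=
  ((h.contDiffOn.differentiableOn (by norm_num)).differentiableAt
    (isOpen_Ioo.mem_nhds ht)).hasDerivAt

theorem contDiffOn_deriv (h : HypProfile a b x₁) : ContDiffOn ℝ 1 (deriv x₁) (Ioo a b) :=
  h.contDiffOn.deriv_of_isOpen isOpen_Ioo (by norm_num)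

theorem hasDerivAt_deriv (h : HypProfile a b x₁) (ht : t ∈ Ioo a b) :
    HasDerivAt (deriv x₁) (deriv (deriv x₁) t) t :=
  ((h.contDiffOn_deriv.differentiableOn one_ne_zero).differentiableAt
    (isOpen_Ioo.mem_nhds ht)).hasDerivAt

theorem sq_sub_one_pos (h : HypProfile a b x₁) (ht : t ∈ Ioo a b) : 0 < x₁ t ^ 2 - 1 := by
  nlinarith [h.one_lt t ht]

theorem hypR_pos (h : HypProfile a b x₁) (ht : t ∈ Ioo a b) : 0 < hypR x₁ t :=
  sqrt_pos.2 (h.sq_sub_one_pos ht)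

theorem hypR_sq (h : HypProfile a b x₁) (ht : t ∈ Ioo a b) : hypR x₁ t ^ 2 = x₁ t ^ 2 - 1 :=
  sq_sqrt (h.sq_sub_one_pos ht).le

theorem hypQ_pos (h : HypProfile a b x₁) (ht : t ∈ Ioo a b) : 0 < hypQ x₁ t :=
  sqrt_pos.2 (h.radicand_pos t ht)

theorem hypQ_sq (h : HypProfile a b x₁) (ht : t ∈ Ioo a b) :
    hypQ x₁ t ^ 2 = -1 + x₁ t ^ 2 - deriv x₁ t ^ 2 :=
  sq_sqrt (h.radicand_pos t ht).le

theorem hasDerivAt_hypR (h : HypProfile a b x₁) (ht : t ∈ Ioo a b) :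
    HasDerivAt (hypR x₁) (x₁ t * deriv x₁ t / hypR x₁ t) t := by
  refine ((((h.hasDerivAt ht).fun_pow 2).sub_const 1).sqrt
    (h.sq_sub_one_pos ht).ne').congr_deriv ?_
  simp only [hypR]
  field_simp
  norm_num
  ring

theorem hasDerivAt_hypQ (h : HypProfile a b x₁) (ht : t ∈ Ioo a b) :
    HasDerivAt (hypQ x₁) ((x₁ t - deriv (deriv x₁) t) / hypQ x₁ t * deriv x₁ t) t := by
  refine ((((h.hasDerivAt ht).fun_pow 2).const_add (-1)).sub
    ((h.hasDerivAt_deriv ht).fun_pow 2)).sqrt (h.radicand_pos t ht).ne' |>.congr_deriv ?_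
  simp only [hypQ]
  field_simp
  norm_num
  ring

theorem hasDerivAt_hypPhi (h : HypProfile a b x₁) (ht : t ∈ Ioo a b) :
    HasDerivAt (hypPhi x₁) (hypQ x₁ t / hypR x₁ t ^ 2) t := by
  have hcont : ContinuousOn (fun σ => √(-1 + x₁ σ ^ 2 - deriv x₁ σ ^ 2) / (x₁ σ ^ 2 - 1))
      (Ioo a b) := by
    have hx := h.contDiffOn.continuousOn
    have hx' := h.contDiffOn_deriv.continuousOn
    exact ((continuousOn_const.add (hx.pow 2)).sub (hx'.pow 2)).sqrt.div
      ((hx.pow 2).sub continuousOn_const) fun s hs => (h.sq_sub_one_pos hs).ne'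
  rw [h.hypR_sq ht]
  exact hasDerivAt_intervalIntegral_of_continuousOn isOpen_Ioo ordConnected_Ioo hcont
    h.zero_mem ht

theorem hasDerivAt_hypy (h : HypProfile a b x₁) (ht : t ∈ Ioo a b) :
    HasDerivAt (hypy x₁) (x₁ t * deriv x₁ t / hypR x₁ t * cos (hypPhi x₁ t)
      - hypQ x₁ t / hypR x₁ t * sin (hypPhi x₁ t)) t := by
  refine ((h.hasDerivAt_hypR ht).mul (h.hasDerivAt_hypPhi ht).cos).congr_deriv ?_
  field_simp [(h.hypR_pos ht).ne']
  ring

theorem hasDerivAt_hypz (h : HypProfile a b x₁) (ht : t ∈ Ioo a b) :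
    HasDerivAt (hypz x₁) (x₁ t * deriv x₁ t / hypR x₁ t * sin (hypPhi x₁ t)
      + hypQ x₁ t / hypR x₁ t * cos (hypPhi x₁ t)) t := by
  refine ((h.hasDerivAt_hypR ht).mul (h.hasDerivAt_hypPhi ht).sin).congr_deriv ?_
  field_simp [(h.hypR_pos ht).ne']

theorem hypy_mul_deriv_hypz_sub (h : HypProfile a b x₁) (ht : t ∈ Ioo a b) :
    hypy x₁ t * deriv (hypz x₁) t - hypz x₁ t * deriv (hypy x₁) t = hypQ x₁ t := by
  rw [(h.hasDerivAt_hypy ht).deriv, (h.hasDerivAt_hypz ht).deriv]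
  simp only [hypy_eq, hypz_eq]
  field_simp [(h.hypR_pos ht).ne']
  linear_combination hypQ x₁ t * sin_sq_add_cos_sq (hypPhi x₁ t)

theorem hypx_mul_deriv_hypz_sub (h : HypProfile a b x₁) (ht : t ∈ Ioo a b) :
    hypx x₁ t * deriv (hypz x₁) t - deriv (hypx x₁) t * hypz x₁ t
      = deriv x₁ t / hypR x₁ t * sin (hypPhi x₁ t)
        + x₁ t * hypQ x₁ t / hypR x₁ t * cos (hypPhi x₁ t) := by
  rw [(h.hasDerivAt_hypz ht).deriv]
  simp only [hypx_eq, hypz_eq]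
  field_simp [(h.hypR_pos ht).ne']
  linear_combination (-(deriv x₁ t * sin (hypPhi x₁ t))) * h.hypR_sq ht

theorem deriv_hypx_mul_hypy_sub (h : HypProfile a b x₁) (ht : t ∈ Ioo a b) :
    deriv (hypx x₁) t * hypy x₁ t - hypx x₁ t * deriv (hypy x₁) t
      = -(deriv x₁ t / hypR x₁ t * cos (hypPhi x₁ t)
        - x₁ t * hypQ x₁ t / hypR x₁ t * sin (hypPhi x₁ t)) := by
  rw [(h.hasDerivAt_hypy ht).deriv]
  simp only [hypx_eq, hypy_eq]
  field_simp [(h.hypR_pos ht).ne']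
  linear_combination (deriv x₁ t * cos (hypPhi x₁ t)) * h.hypR_sq ht

theorem hasDerivAt_deriv_div_hypR (h : HypProfile a b x₁) (ht : t ∈ Ioo a b) :
    HasDerivAt (fun s => deriv x₁ s / hypR x₁ s)
      (x₁ t * hypQ x₁ t / hypR x₁ t * (hypQ x₁ t / hypR x₁ t ^ 2)
        - (x₁ t - deriv (deriv x₁) t) / hypQ x₁ t * (hypQ x₁ t / hypR x₁ t)) t := by
  refine ((h.hasDerivAt_deriv ht).div (h.hasDerivAt_hypR ht) (h.hypR_pos ht).ne').congr_deriv ?_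
  field_simp [(h.hypR_pos ht).ne', (h.hypQ_pos ht).ne']
  linear_combination x₁ t * h.hypR_sq ht - x₁ t * h.hypQ_sq ht

theorem hasDerivAt_mul_hypQ_div_hypR (h : HypProfile a b x₁) (ht : t ∈ Ioo a b) :
    HasDerivAt (fun s => x₁ s * hypQ x₁ s / hypR x₁ s)
      ((x₁ t - deriv (deriv x₁) t) / hypQ x₁ t * (x₁ t * deriv x₁ t / hypR x₁ t)
        - deriv x₁ t / hypR x₁ t * (hypQ x₁ t / hypR x₁ t ^ 2)) t := by
  refine (((h.hasDerivAt ht).mul (h.hasDerivAt_hypQ ht)).div (h.hasDerivAt_hypR ht)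
    (h.hypR_pos ht).ne').congr_deriv ?_
  simp only [Pi.mul_apply]
  field_simp [(h.hypR_pos ht).ne', (h.hypQ_pos ht).ne']
  linear_combination deriv x₁ t * hypQ x₁ t ^ 2 * h.hypR_sq ht

theorem hasDerivAt_hypx_mul_deriv_hypz_sub (h : HypProfile a b x₁) (ht : t ∈ Ioo a b) :
    HasDerivAt (fun s => hypx x₁ s * deriv (hypz x₁) s - deriv (hypx x₁) s * hypz x₁ s)
      ((x₁ t - deriv (deriv x₁) t) / hypQ x₁ t * deriv (hypy x₁) t) t := by
  have hN := (h.hasDerivAt_deriv_div_hypR ht).mul_sin_add_mul_cos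
    (h.hasDerivAt_mul_hypQ_div_hypR ht) (h.hasDerivAt_hypPhi ht)
  rw [(h.hasDerivAt_hypy ht).deriv]
  refine (hN.congr_of_eventuallyEq ?_).congr_deriv (by ring)
  exact eventuallyEq_of_mem (isOpen_Ioo.mem_nhds ht) fun s hs => h.hypx_mul_deriv_hypz_sub hs

theorem hasDerivAt_deriv_hypx_mul_hypy_sub (h : HypProfile a b x₁) (ht : t ∈ Ioo a b) :
    HasDerivAt (fun s => deriv (hypx x₁) s * hypy x₁ s - hypx x₁ s * deriv (hypy x₁) s)
      ((x₁ t - deriv (deriv x₁) t) / hypQ x₁ t * deriv (hypz x₁) t) t := by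
  have hN := ((h.hasDerivAt_deriv_div_hypR ht).mul_cos_sub_mul_sin
    (h.hasDerivAt_mul_hypQ_div_hypR ht) (h.hasDerivAt_hypPhi ht)).neg
  rw [(h.hasDerivAt_hypz ht).deriv]
  refine (hN.congr_of_eventuallyEq ?_).congr_deriv (by ring)
  exact eventuallyEq_of_mem (isOpen_Ioo.mem_nhds ht) fun s hs => h.deriv_hypx_mul_hypy_sub hs

theorem hasDerivAt_hypX_profile (h : HypProfile a b x₁) (ht : t ∈ Ioo a b) (θ : ℝ) :
    HasDerivAt (fun s => hypX x₁ s θ)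
      (deriv x₁ t * cosh θ, deriv x₁ t * sinh θ, deriv (hypy x₁) t, deriv (hypz x₁) t) t :=
  ((h.hasDerivAt ht).mul_const _).prodMk (((h.hasDerivAt ht).mul_const _).prodMk
    ((h.hasDerivAt_hypy ht).differentiableAt.hasDerivAt.prodMk
      (h.hasDerivAt_hypz ht).differentiableAt.hasDerivAt))

theorem hasDerivAt_hypN_profile (h : HypProfile a b x₁) (ht : t ∈ Ioo a b) (θ : ℝ) :
    HasDerivAt (fun s => hypN x₁ s θ)
      (((x₁ t - deriv (deriv x₁) t) / hypQ x₁ t) •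
        (deriv x₁ t * cosh θ, deriv x₁ t * sinh θ, deriv (hypy x₁) t, deriv (hypz x₁) t)) t := by
  have hW : HasDerivAt (fun s => hypy x₁ s * deriv (hypz x₁) s - hypz x₁ s * deriv (hypy x₁) s)
      ((x₁ t - deriv (deriv x₁) t) / hypQ x₁ t * deriv x₁ t) t :=
    (h.hasDerivAt_hypQ ht).congr_of_eventuallyEq
      (eventuallyEq_of_mem (isOpen_Ioo.mem_nhds ht) fun s hs => h.hypy_mul_deriv_hypz_sub hs)
  refine ((hW.mul_const (cosh θ)).prodMk ((hW.mul_const (sinh θ)).prodMk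
    ((h.hasDerivAt_hypx_mul_deriv_hypz_sub ht).prodMk
      (h.hasDerivAt_deriv_hypx_mul_hypy_sub ht)))).congr_deriv ?_
  simp only [Prod.smul_mk, smul_eq_mul, mul_assoc]

end HypProfile

theorem hasDerivAt_hypX_rotation (x₁ : ℝ → ℝ) (t θ : ℝ) :
    HasDerivAt (fun ψ => hypX x₁ t ψ) (hypx x₁ t * sinh θ, hypx x₁ t * cosh θ, 0, 0) θ :=
  ((hasDerivAt_cosh θ).const_mul _).prodMk (((hasDerivAt_sinh θ).const_mul _).prodMk
    ((hasDerivAt_const θ _).prodMk (hasDerivAt_const θ _)))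

theorem hasDerivAt_hypN_rotation (x₁ : ℝ → ℝ) (t θ : ℝ) :
    HasDerivAt (fun ψ => hypN x₁ t ψ)
      ((hypy x₁ t * deriv (hypz x₁) t - hypz x₁ t * deriv (hypy x₁) t) * sinh θ,
        (hypy x₁ t * deriv (hypz x₁) t - hypz x₁ t * deriv (hypy x₁) t) * cosh θ, 0, 0) θ :=
  ((hasDerivAt_cosh θ).const_mul _).prodMk (((hasDerivAt_sinh θ).const_mul _).prodMk
    ((hasDerivAt_const θ _).prodMk (hasDerivAt_const θ _)))

/-- For the hyperbolic-type rotational surface, `∂N/∂t = λ₁·∂X/∂t` and `∂N/∂θ = λ₂·∂X/∂θ`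
with `λ₁ = (x₁ − x₁'')/√(−1 + x₁² − (x₁')²)` and `λ₂ = √(−1 + x₁² − (x₁')²)/x₁`. -/
theorem stmt_11 (a b : ℝ) (h0 : (0:ℝ) ∈ Ioo a b) (x₁ : ℝ → ℝ)
    (hx₁ : ContDiffOn ℝ 2 x₁ (Ioo a b))
    (hbig : ∀ t ∈ Ioo a b, 1 < x₁ t)
    (hQ : ∀ t ∈ Ioo a b, 0 < -1 + x₁ t ^ 2 - deriv x₁ t ^ 2) :
    ∀ t ∈ Ioo a b, ∀ θ : ℝ,
      deriv (fun s => hypN x₁ s θ) t =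
        ((x₁ t - deriv (deriv x₁) t) / Real.sqrt (-1 + x₁ t ^ 2 - deriv x₁ t ^ 2)) •
          deriv (fun s => hypX x₁ s θ) t ∧
      deriv (fun ψ => hypN x₁ t ψ) θ =
        (Real.sqrt (-1 + x₁ t ^ 2 - deriv x₁ t ^ 2) / x₁ t) •
          deriv (fun ψ => hypX x₁ t ψ) θ := by
  intro t ht θ
  have h : HypProfile a b x₁ := ⟨h0, hx₁, hbig, hQ⟩
  refine ⟨?_, ?_⟩
  · rw [(h.hasDerivAt_hypN_profile ht θ).deriv, (h.hasDerivAt_hypX_profile ht θ).deriv]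
    rfl
  · change _ = (hypQ x₁ t / x₁ t) • _
    rw [(hasDerivAt_hypN_rotation x₁ t θ).deriv, (hasDerivAt_hypX_rotation x₁ t θ).deriv,
      h.hypy_mul_deriv_hypz_sub ht, hypx_eq]
    have hx : x₁ t ≠ 0 := (zero_lt_one.trans (hbig t ht)).ne'
    simp only [Prod.smul_mk, smul_eq_mul, mul_zero]
    field_simp
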